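/- arXiv:math/9803128 — 7 statements merged into one kernel-verified Lean document; each statement's English description precedes it below -/
import Mathlib

section
/- For nonnegative integers k, l, n, the number of walks of length n on the nonnegative-integer path graph (vertices ℕ, edges between consecutive nonnegative integers) from k to l equals binomial(n, (n+k-l)/2) − binomial(n, (n-k-l)/2 − 1) if n + k − l is even, and 0 otherwise (binomials with negative or out-of-range arguments are 0). -/
/-- Binomial coefficient `n choose j` with an integer lower index, equal to `0`
when `j < 0` (and automatically `0` when `j > n`). -/
def intChoose (n : ℕ) (j : ℤ) : ℕ := if 0 ≤ j then n.choose j.toNat else 0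

/-- The position after `t` steps of a walk starting at `start : ℤ` with step
sequence `s` (`true` = `+1`, `false` = `-1`). -/
def walkPos {n : ℕ} (start : ℤ) (s : Fin n → Bool) (t : Fin (n + 1)) : ℤ :=
  start + ∑ i : Fin n, if (i : ℕ) < (t : ℕ) then (if s i then (1 : ℤ) else -1) else 0

def W (n : ℕ) (x : ℤ) (l : ℕ) (s : Fin n → Bool) : Prop :=
  (∀ t : Fin (n + 1), 0 ≤ walkPos x s t) ∧ walkPos x s (Fin.last n) = (l : ℤ)

lemma walkPos_zero {n : ℕ} (x : ℤ) (s : Fin n → Bool) : walkPos x s 0 = x := by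
  simp [walkPos]

lemma walkPos_succ_cons {n : ℕ} (x : ℤ) (b : Bool) (s : Fin n → Bool) (t : Fin (n + 1)) :
    walkPos x (Fin.cons b s) t.succ = walkPos (x + if b then 1 else -1) s t := by
  unfold walkPos
  rw [Fin.sum_univ_succ]
  simp only [Fin.cons_zero, Fin.cons_succ, Fin.val_succ, Fin.val_zero, Fin.val_succ]
  rw [if_pos (show (0:ℕ) < (t:ℕ) + 1 by omega)]
  have h1 : ∀ i : Fin n, ((if (i : ℕ) + 1 < (t : ℕ) + 1 then (if s i then (1:ℤ) else -1) else 0))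
      = (if (i : ℕ) < (t : ℕ) then (if s i then (1:ℤ) else -1) else 0) := by
    intro i; simp [Nat.succ_lt_succ_iff]
  simp only [h1]
  ring

lemma W_cons {n : ℕ} (x : ℤ) (hx : 0 ≤ x) (l : ℕ) (b : Bool) (s : Fin n → Bool) :
    W (n + 1) x l (Fin.cons b s) ↔ W n (x + if b then 1 else -1) l s := by
  unfold W
  rw [Fin.forall_fin_succ]
  rw [show (Fin.last (n+1)) = (Fin.last n).succ from rfl]
  simp only [walkPos_zero, walkPos_succ_cons]
  tauto

lemma card_neg {n : ℕ} (x : ℤ) (hx : x < 0) (l : ℕ) :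
    Nat.card {s : Fin n → Bool // W n x l s} = 0 := by
  rw [Nat.card_eq_zero]
  left
  constructor
  rintro ⟨s, hs, -⟩
  have := hs 0
  rw [walkPos_zero] at this
  omega

def boolSplit {γ : Type*} (Q : Bool × γ → Prop) :
    {p : Bool × γ // Q p} ≃ {g // Q (true, g)} ⊕ {g // Q (false, g)} where
  toFun p := match p with
    | ⟨(true, g), h⟩ => Sum.inl ⟨g, h⟩
    | ⟨(false, g), h⟩ => Sum.inr ⟨g, h⟩
  invFun x := match x with
    | Sum.inl ⟨g, h⟩ => ⟨(true, g), h⟩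
    | Sum.inr ⟨g, h⟩ => ⟨(false, g), h⟩
  left_inv := by rintro ⟨⟨b, g⟩, h⟩; cases b <;> rfl
  right_inv := by rintro (⟨g, h⟩ | ⟨g, h⟩) <;> rfl

lemma card_succ (n : ℕ) (x : ℤ) (hx : 0 ≤ x) (l : ℕ) :
    Nat.card {s : Fin (n+1) → Bool // W (n+1) x l s}
      = Nat.card {s : Fin n → Bool // W n (x+1) l s}
        + Nat.card {s : Fin n → Bool // W n (x-1) l s} := by
  have e1 : {s : Fin (n+1) → Bool // W (n+1) x l s}
      ≃ {p : Bool × (Fin n → Bool) // W (n+1) x l (Fin.cons p.1 p.2)} :=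
    ((Fin.consEquiv (fun _ : Fin (n+1) => Bool)).subtypeEquiv (by intro p; rfl)).symm
  have e2 := boolSplit (fun p : Bool × (Fin n → Bool) => W (n+1) x l (Fin.cons p.1 p.2))
  rw [Nat.card_congr (e1.trans e2), Nat.card_sum]
  congr 1
  · exact Nat.card_congr (Equiv.subtypeEquivRight (fun s => by
      simpa using W_cons x hx l true s))
  · exact Nat.card_congr (Equiv.subtypeEquivRight (fun s => by
      simpa [sub_eq_add_neg] using W_cons x hx l false s))

def cN : ℕ → ℕ → ℕ → ℕ
  | 0, k, l => if k = l then 1 else 0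
  | (n+1), k, l => cN n (k+1) l + if k = 0 then 0 else cN n (k-1) l

lemma card_eq_cN (n : ℕ) : ∀ (k l : ℕ),
    Nat.card {s : Fin n → Bool // W n (k : ℤ) l s} = cN n k l := by
  induction n with
  | zero =>
    intro k l
    by_cases h : k = l
    · subst h
      rw [show cN 0 k k = 1 from if_pos rfl]
      rw [Nat.card_eq_one_iff_unique]
      constructor
      · constructor
        rintro ⟨s, -⟩ ⟨s', -⟩
        ext i; exact absurd i.2 (by omega)
      · exact ⟨⟨fun _ => true, fun t => by
          rw [show t = 0 from Fin.ext (by omega), walkPos_zero]; positivity,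
          by rw [show Fin.last 0 = 0 from rfl, walkPos_zero]⟩⟩
    · rw [show cN 0 k l = (if k = l then 1 else 0) from rfl, if_neg h, Nat.card_eq_zero]
      left
      constructor
      rintro ⟨s, -, hlast⟩
      rw [show Fin.last 0 = 0 from rfl, walkPos_zero] at hlast
      exact h (by exact_mod_cast hlast)
  | succ n ih =>
    intro k l
    rw [card_succ n k (by positivity) l]
    rcases Nat.eq_zero_or_pos k with hk | hk
    · subst hk
      rw [show ((0:ℕ):ℤ) + 1 = ((1:ℕ):ℤ) by norm_num,
        show ((0:ℕ):ℤ) - 1 = (-1 : ℤ) by norm_num, ih 1 l, card_neg (-1) (by norm_num) l]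
      simp [cN]
    · have h1 : (k : ℤ) + 1 = ((k+1 : ℕ) : ℤ) := by push_cast; ring
      have h2 : (k : ℤ) - 1 = ((k-1 : ℕ) : ℤ) := by
        have : 1 ≤ k := hk
        push_cast [this]; ring
      rw [h1, h2, ih (k+1) l, ih (k-1) l]
      have hk' : k ≠ 0 := by omega
      simp [cN, hk']

lemma intChoose_pascal (n : ℕ) (j : ℤ) :
    intChoose (n+1) j = intChoose n j + intChoose n (j-1) := by
  unfold intChoose
  rcases lt_trichotomy j 0 with h | h | h
  · rw [if_neg (by omega), if_neg (by omega), if_neg (by omega)]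
  · subst h; simp
  · rw [if_pos (by omega), if_pos (by omega), if_pos (by omega)]
    have hj : j.toNat = (j-1).toNat + 1 := by omega
    rw [hj, Nat.choose_succ_succ]
    ring

lemma intChoose_zero (j : ℤ) : intChoose 0 j = if j = 0 then 1 else 0 := by
  unfold intChoose
  rcases lt_trichotomy j 0 with h | h | h
  · rw [if_neg (by omega), if_neg (by omega)]
  · subst h; simp
  · rw [if_pos (by omega), if_neg (by omega)]
    exact Nat.choose_eq_zero_of_lt (by omega)

lemma cN_formula (n : ℕ) : ∀ (k l : ℕ),
    (cN n k l : ℤ) =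
      if Even ((n : ℤ) + k - l) then
        (intChoose n (((n : ℤ) + k - l) / 2) : ℤ) -
          (intChoose n (((n : ℤ) - k - l) / 2 - 1) : ℤ)
      else 0 := by
  induction n with
  | zero =>
    intro k l
    simp only [Nat.cast_zero]
    by_cases hp : Even ((0 : ℤ) + (k:ℤ) - l)
    · rw [if_pos hp]
      obtain ⟨a, ha⟩ := hp
      have hk0 : (0:ℤ) ≤ (k:ℤ) := by positivity
      have hl0 : (0:ℤ) ≤ (l:ℤ) := by positivity
      have hd1 : ((0:ℤ) + k - l) / 2 = a := by omega
      have hd2 : ((0:ℤ) - k - l) / 2 - 1 ≠ 0 := by omega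
      rw [hd1, intChoose_zero, intChoose_zero, if_neg hd2]
      by_cases h : k = l
      · subst h
        have : a = 0 := by omega
        simp [cN, this]
      · have ha0 : a ≠ 0 := by
          intro h0
          exact h (by exact_mod_cast (by omega : (k:ℤ) = l))
        simp [cN, h, ha0]
    · rw [if_neg hp]
      have : k ≠ l := by
        intro h; subst h; exact hp ⟨0, by ring⟩
      simp [cN, this]
  | succ n ih =>
    intro k l
    rcases Nat.eq_zero_or_pos k with hk | hk
    · subst hk
      have hc : (cN (n+1) 0 l : ℤ) = (cN n 1 l : ℤ) := by simp [cN]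
      rw [hc, ih 1 l]
      push_cast
      by_cases hp : Even ((n:ℤ) + 1 + 0 - l)
      · obtain ⟨a, ha⟩ := hp
        have hp' : Even ((n:ℤ) + 1 + 0 - l) := ⟨a, ha⟩
        have h1 : Even ((n:ℤ) + 1 - (l:ℤ)) := ⟨a, by omega⟩
        rw [if_pos h1, if_pos hp']
        have hd1 : ((n:ℤ) + 1 - l) / 2 = a := by omega
        have hd2 : ((n:ℤ) - 1 - l) / 2 - 1 = a - 1 - 1 := by omega
        have hd3 : ((n:ℤ) + 1 + 0 - l) / 2 = a := by omega
        have hd4 : ((n:ℤ) + 1 - 0 - l) / 2 - 1 = a - 1 := by omega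
        rw [hd1, hd2, hd3, hd4, intChoose_pascal n a, intChoose_pascal n (a-1)]
        push_cast
        ring
      · have h1 : ¬ Even ((n:ℤ) + 1 - (l:ℤ)) := by
          intro ⟨a, ha⟩; exact hp ⟨a, by omega⟩
        rw [if_neg h1, if_neg hp]
    · have hk' : k ≠ 0 := by omega
      have hc : (cN (n+1) k l : ℤ) = (cN n (k+1) l : ℤ) + (cN n (k-1) l : ℤ) := by
        simp [cN, hk']
      rw [hc, ih (k+1) l, ih (k-1) l]
      have hcast : ((k-1 : ℕ) : ℤ) = (k:ℤ) - 1 := by omega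
      have hcast2 : ((k+1 : ℕ) : ℤ) = (k:ℤ) + 1 := by omega
      rw [hcast, hcast2]
      push_cast
      by_cases hp : Even ((n:ℤ) + 1 + k - l)
      · obtain ⟨a, ha⟩ := hp
        have hp' : Even ((n:ℤ) + 1 + (k:ℤ) - l) := ⟨a, ha⟩
        have h1 : Even ((n:ℤ) + ((k:ℤ) + 1) - l) := ⟨a, by omega⟩
        have h2 : Even ((n:ℤ) + ((k:ℤ) - 1) - l) := ⟨a - 1, by omega⟩
        rw [if_pos h1, if_pos h2, if_pos hp']
        have hd1 : ((n:ℤ) + ((k:ℤ)+1) - l) / 2 = a := by omega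
        have hd2 : ((n:ℤ) - ((k:ℤ)+1) - l) / 2 - 1 = ((n:ℤ) + 1 - k - l) / 2 - 1 - 1 := by omega
        have hd3 : ((n:ℤ) + ((k:ℤ)-1) - l) / 2 = a - 1 := by omega
        have hd4 : ((n:ℤ) - ((k:ℤ)-1) - l) / 2 - 1 = ((n:ℤ) + 1 - k - l) / 2 - 1 := by omega
        have hd5 : ((n:ℤ) + 1 + k - l) / 2 = a := by omega
        rw [hd1, hd2, hd3, hd4, hd5, intChoose_pascal n a,
          intChoose_pascal n (((n:ℤ) + 1 - k - l) / 2 - 1)]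
        push_cast
        ring
      · have h1 : ¬ Even ((n:ℤ) + ((k:ℤ) + 1) - l) := by
          intro ⟨a, ha⟩; exact hp ⟨a, by omega⟩
        have h2 : ¬ Even ((n:ℤ) + ((k:ℤ) - 1) - l) := by
          intro ⟨a, ha⟩; exact hp ⟨a + 1, by omega⟩
        rw [if_neg h1, if_neg h2, if_neg hp]
        ring

/-- The number of walks of length `n` on the nonnegative-integer path graph `P`
(vertices `ℕ`, edges between consecutive nonnegative integers) from `k` to `l`
equals `binomial(n,(n+k-l)/2) − binomial(n,(n-k-l)/2 − 1)` if `n + k − l` is even,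
and `0` otherwise (binomials with negative or out-of-range lower index are `0`). -/
theorem walks_on_N_path (n k l : ℕ) :
    (Fintype.card {s : Fin n → Bool //
        (∀ t : Fin (n + 1), 0 ≤ walkPos (k : ℤ) s t) ∧
          walkPos (k : ℤ) s (Fin.last n) = (l : ℤ)} : ℤ) =
      if Even ((n : ℤ) + k - l) then
        (intChoose n (((n : ℤ) + k - l) / 2) : ℤ) -
          (intChoose n (((n : ℤ) - k - l) / 2 - 1) : ℤ)
      else 0 := by
  have h1 : Nat.card {s : Fin n → Bool // W n (k : ℤ) l s} = cN n k l := card_eq_cN n k l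
  simp only [W] at h1
  rw [← Nat.card_eq_fintype_card, h1, cN_formula n k l]
end

section
/- For nonnegative integers n and m, the number of walks of length n from 0 to m on the nonnegative-integer path graph equals ((m+1)/(n+1)) · binomial(n+1, (n-m)/2) if n − m is even and n ≥ m, and 0 otherwise. -/
namespace WalkAux

def stepv (b : Bool) : ℤ := if b then 1 else -1

def pos {n : ℕ} (s : Fin n → Bool) (k : ℕ) : ℤ :=
  ∑ i : Fin n, if (i : ℕ) < k then stepv (s i) else 0

lemma pos_snoc {n : ℕ} (s : Fin n → Bool) (b : Bool) (k : ℕ) :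
    pos (Fin.snoc s b) k = pos s k + if n < k then stepv b else 0 := by
  unfold pos
  rw [Fin.sum_univ_castSucc]
  simp

def Wcond {n : ℕ} (m : ℤ) (s : Fin n → Bool) : Prop :=
  (∀ k ≤ n, 0 ≤ pos s k) ∧ pos s n = m

instance {n : ℕ} (m : ℤ) : DecidablePred (Wcond (n := n) m) := fun s => by
  unfold Wcond; exact inferInstance

def W (n : ℕ) (m : ℤ) : ℕ := (Finset.univ.filter (Wcond (n := n) m)).card

lemma pos_full {n : ℕ} (s : Fin n → Bool) : pos s n = ∑ i : Fin n, stepv (s i) := by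
  unfold pos
  exact Finset.sum_congr rfl fun i _ => by simp [i.isLt]

lemma pos_le {n : ℕ} (s : Fin n → Bool) : pos s n ≤ n := by
  rw [pos_full]
  calc ∑ i : Fin n, stepv (s i) ≤ ∑ _i : Fin n, (1 : ℤ) :=
        Finset.sum_le_sum (fun i _ => by cases s i <;> simp [stepv])
    _ = n := by simp

lemma even_sub_pos {n : ℕ} (s : Fin n → Bool) : Even ((n : ℤ) - pos s n) := by
  have h : (n : ℤ) - pos s n = ∑ i : Fin n, (1 - stepv (s i)) := by
    rw [pos_full, Finset.sum_sub_distrib]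
    simp
  rw [h]
  exact Finset.even_sum _ fun i _ => by cases s i <;> simp [stepv]

lemma W_neg {n : ℕ} {m : ℤ} (hm : m < 0) : W n m = 0 := by
  rw [W, Finset.card_eq_zero, Finset.filter_eq_empty_iff]
  rintro s - ⟨h1, h2⟩
  have := h1 n le_rfl
  omega

lemma Wcond_snoc {n : ℕ} {m : ℤ} (hm : 0 ≤ m) (s : Fin n → Bool) (b : Bool) :
    Wcond m (Fin.snoc s b) ↔ Wcond (m - stepv b) s := by
  have hstab : pos s (n + 1) = pos s n := by
    unfold pos
    exact Finset.sum_congr rfl fun i _ => by simp [i.isLt, Nat.lt_succ_of_lt i.isLt]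
  have hend : pos (Fin.snoc s b) (n + 1) = pos s n + stepv b := by
    rw [pos_snoc, hstab]; simp
  constructor
  · rintro ⟨h1, h2⟩
    rw [hend] at h2
    refine ⟨fun k hk => ?_, by omega⟩
    have := h1 k (by omega)
    rwa [pos_snoc, if_neg (by omega), add_zero] at this
  · rintro ⟨h1, h2⟩
    refine ⟨fun k hk => ?_, by rw [hend]; omega⟩
    rw [pos_snoc]
    rcases Nat.lt_or_ge n k with h | h
    · have hk' : k = n + 1 := by omega
      subst hk'
      simp only [if_pos h]
      have := h1 n le_rfl
      omega
    · rw [if_neg (by omega), add_zero]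
      exact h1 k h

lemma card_last (n : ℕ) (m : ℤ) (hm : 0 ≤ m) (b : Bool) :
    (Finset.univ.filter
        (fun s' : Fin (n + 1) → Bool => Wcond m s' ∧ s' (Fin.last n) = b)).card
      = W n (m - stepv b) := by
  rw [W]
  refine Finset.card_nbij' (fun s' => Fin.init s') (fun s => Fin.snoc s b) ?_ ?_ ?_ ?_
  · intro s' hs'
    simp only [Finset.mem_coe, Finset.mem_filter, Finset.mem_univ, true_and] at hs' ⊢
    obtain ⟨h1, h2⟩ := hs'
    have hs : s' = Fin.snoc (Fin.init s') b := by
      rw [← h2, Fin.snoc_init_self]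
    rw [hs] at h1
    exact (Wcond_snoc hm _ b).1 h1
  · intro s hs
    simp only [Finset.mem_coe, Finset.mem_filter, Finset.mem_univ, true_and] at hs ⊢
    exact ⟨(Wcond_snoc hm s b).2 hs, by simp⟩
  · intro s' hs'
    simp only [Finset.mem_coe, Finset.mem_filter, Finset.mem_univ, true_and] at hs'
    rw [← hs'.2]
    exact Fin.snoc_init_self s'
  · intro s hs
    simp

lemma W_succ (n : ℕ) (m : ℤ) (hm : 0 ≤ m) :
    W (n + 1) m = W n (m - 1) + W n (m + 1) := by
  have key := Finset.card_filter_add_card_filter_not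
    (s := Finset.univ.filter (Wcond (n := n + 1) m))
    (p := fun s' => s' (Fin.last n) = true)
  rw [Finset.filter_filter, Finset.filter_filter] at key
  have ht := card_last n m hm true
  have hf := card_last n m hm false
  simp only [stepv] at ht hf
  norm_num at ht hf
  simp only [Bool.not_eq_true] at key
  rw [W, ← key, ht, hf]

def chz (n : ℕ) (k : ℤ) : ℤ := if 0 ≤ k then (n.choose k.toNat : ℤ) else 0

lemma chz_neg {n : ℕ} {k : ℤ} (h : k < 0) : chz n k = 0 := by
  rw [chz, if_neg (by omega)]

lemma chz_nonneg {n : ℕ} {k : ℤ} (h : 0 ≤ k) : chz n k = (n.choose k.toNat : ℤ) := by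
  rw [chz, if_pos h]

lemma chz_pascal (n : ℕ) (k : ℤ) : chz (n + 1) k = chz n k + chz n (k - 1) := by
  rcases lt_trichotomy k 0 with h | h | h
  · rw [chz_neg h, chz_neg h, chz_neg (by omega)]
    ring
  · subst h
    rw [chz_nonneg le_rfl, chz_nonneg le_rfl, chz_neg (by omega)]
    simp
  · obtain ⟨t, rfl⟩ : ∃ t : ℕ, k = (t : ℤ) + 1 := ⟨(k - 1).toNat, by omega⟩
    rw [chz_nonneg (by omega), chz_nonneg (by omega), chz_nonneg (by omega)]
    have h1 : ((t : ℤ) + 1).toNat = t + 1 := by omega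
    have h2 : ((t : ℤ) + 1 - 1).toNat = t := by omega
    rw [h1, h2, Nat.choose_succ_succ]
    push_cast
    ring

lemma W_zero_ne {m : ℤ} (hm : m ≠ 0) : W 0 m = 0 := by
  rw [W, Finset.card_eq_zero, Finset.filter_eq_empty_iff]
  rintro s - ⟨-, h2⟩
  apply hm
  rw [← h2]
  simp [pos]

lemma W_zero_zero : W 0 0 = 1 := by
  rw [W]
  have : Finset.univ.filter (Wcond (n := 0) 0) = Finset.univ := by
    rw [Finset.filter_eq_self]
    intro s _
    constructor
    · intro k _; simp [pos]
    · simp [pos]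
  rw [this]
  simp

lemma W_closed : ∀ (n : ℕ) (d : ℤ), 2 * d ≤ (n : ℤ) →
    (W n ((n : ℤ) - 2 * d) : ℤ) = chz n d - chz n (d - 1) := by
  intro n
  induction n with
  | zero =>
    intro d hd
    simp only [Nat.cast_zero] at hd ⊢
    rcases eq_or_lt_of_le hd with h | h
    · have hd0 : d = 0 := by omega
      subst hd0
      norm_num [W_zero_zero, chz_nonneg, chz_neg (show (-1:ℤ) < 0 by omega)]
    · have hd0 : d < 0 := by omega
      rw [W_zero_ne (by omega), chz_neg hd0, chz_neg (by omega)]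
      simp
  | succ n ih =>
    intro d hd
    have hcast : ((n + 1 : ℕ) : ℤ) = (n : ℤ) + 1 := by push_cast; ring
    rw [hcast] at hd ⊢
    have hm : 0 ≤ (n : ℤ) + 1 - 2 * d := by omega
    rw [W_succ n _ hm]
    have harg1 : (n : ℤ) + 1 - 2 * d + 1 = (n : ℤ) - 2 * (d - 1) := by ring
    have h2 := ih (d - 1) (by omega)
    rw [harg1]
    rcases lt_or_eq_of_le hd with hlt | heq
    · have h1 := ih d (by omega)
      have harg0 : (n : ℤ) + 1 - 2 * d - 1 = (n : ℤ) - 2 * d := by ring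
      rw [harg0]
      push_cast
      rw [h1, h2, chz_pascal, chz_pascal]
      ring
    · -- 2 * d = n + 1
      have harg0 : (n : ℤ) + 1 - 2 * d - 1 = -1 := by omega
      rw [harg0, W_neg (by omega)]
      have hd1 : 1 ≤ d := by omega
      have hsym : chz n d = chz n (d - 1) := by
        rw [chz_nonneg (by omega), chz_nonneg (by omega)]
        have h1 : d.toNat ≤ n := by omega
        have h2 : (d - 1).toNat = n - d.toNat := by omega
        rw [h2, Nat.choose_symm h1]
      push_cast
      rw [h2, chz_pascal, chz_pascal, hsym]
      ring

lemma walkPos_eq {n : ℕ} (s : Fin n → Bool) (t : Fin (n + 1)) :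
    walkPos 0 s t = pos s (t : ℕ) := by
  simp [walkPos, pos, stepv]

lemma card_eq_W (n m : ℕ) :
    Fintype.card {s : Fin n → Bool //
        (∀ t : Fin (n + 1), 0 ≤ walkPos 0 s t) ∧
          walkPos 0 s (Fin.last n) = (m : ℤ)} = W n (m : ℤ) := by
  have hiff : ∀ s : Fin n → Bool,
      ((∀ t : Fin (n + 1), 0 ≤ walkPos 0 s t) ∧ walkPos 0 s (Fin.last n) = (m : ℤ))
        ↔ Wcond (m : ℤ) s := by
    intro s
    constructor
    · rintro ⟨h1, h2⟩
      refine ⟨fun k hk => ?_, ?_⟩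
      · have := h1 ⟨k, by omega⟩
        rwa [walkPos_eq] at this
      · rw [walkPos_eq] at h2
        simpa using h2
    · rintro ⟨h1, h2⟩
      refine ⟨fun t => ?_, ?_⟩
      · rw [walkPos_eq]
        exact h1 t (by omega)
      · rw [walkPos_eq]
        simpa using h2
  rw [Fintype.card_congr (Equiv.subtypeEquivRight hiff), W, Fintype.card_subtype]

lemma W_vanish (n m : ℕ) (h : ¬(Even (n - m) ∧ m ≤ n)) : W n (m : ℤ) = 0 := by
  rw [W, Finset.card_eq_zero, Finset.filter_eq_empty_iff]
  rintro s - ⟨h1, h2⟩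
  have hle : (m : ℤ) ≤ n := h2 ▸ pos_le s
  have hmn : m ≤ n := by exact_mod_cast hle
  have hev : Even ((n : ℤ) - (m : ℤ)) := h2 ▸ even_sub_pos s
  have hcast : ((n - m : ℕ) : ℤ) = (n : ℤ) - m := by omega
  have : Even (n - m) := by
    rw [← Int.even_coe_nat, hcast]
    exact hev
  exact h ⟨this, hmn⟩

end WalkAux

open WalkAux

/-- The number of walks of length `n` from `0` to `m` on the nonnegative-integer
path graph equals `((m+1)/(n+1)) · binomial(n+1,(n-m)/2)` if `n − m` is even and
`n ≥ m`, and `0` otherwise.  To stay in `ℕ` the identity is stated multiplied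
through by `n + 1`. -/
theorem walks_on_N_path_from_zero (n m : ℕ) :
    (n + 1) * Fintype.card {s : Fin n → Bool //
        (∀ t : Fin (n + 1), 0 ≤ walkPos 0 s t) ∧
          walkPos 0 s (Fin.last n) = (m : ℤ)} =
      if Even (n - m) ∧ m ≤ n then (m + 1) * (n + 1).choose ((n - m) / 2) else 0 := by
  rw [card_eq_W]
  by_cases h : Even (n - m) ∧ m ≤ n
  · obtain ⟨he, hmn⟩ := h
    obtain ⟨r, hr⟩ := he
    have hdiv : (n - m) / 2 = r := by omega
    rw [if_pos ⟨⟨r, hr⟩, hmn⟩, hdiv]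
    have harg : (n : ℤ) - 2 * r = m := by omega
    have hW := W_closed n r (by omega)
    rw [harg] at hW
    have goalZ : ((n : ℤ) + 1) * (W n (m : ℤ) : ℤ) = ((m : ℤ) + 1) * ((n + 1).choose r : ℤ) := by
      rcases Nat.eq_zero_or_pos r with hr0 | hr1
      · subst hr0
        simp only [Nat.cast_zero] at hW harg
        rw [chz_nonneg le_rfl, chz_neg (by omega)] at hW
        simp only [Int.toNat_zero, Nat.choose_zero_right, Nat.cast_one, sub_zero] at hW
        rw [hW, Nat.choose_zero_right]
        push_cast
        omega
      · have htn1 : ((r : ℤ)).toNat = r := by omega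
        have htn2 : ((r : ℤ) - 1).toNat = r - 1 := by omega
        rw [chz_nonneg (by omega), chz_nonneg (by omega), htn1, htn2] at hW
        have hA := Nat.add_one_mul_choose_eq n r
        have hB := Nat.add_one_mul_choose_eq n (r - 1)
        have hC := Nat.choose_succ_right_eq (n + 1) r
        have hr1' : r - 1 + 1 = r := by omega
        rw [hr1'] at hB
        have hA' : ((n : ℤ) + 1) * (n.choose r : ℤ) = ((n + 1).choose (r + 1) : ℤ) * (r + 1) := by
          exact_mod_cast hA
        have hB' : ((n : ℤ) + 1) * (n.choose (r - 1) : ℤ) = ((n + 1).choose r : ℤ) * r := by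
          exact_mod_cast hB
        have hC' : ((n + 1).choose (r + 1) : ℤ) * (r + 1)
            = ((n + 1).choose r : ℤ) * ((n : ℤ) + 1 - r) := by
          have hrn : r ≤ n + 1 := by omega
          have := hC
          zify [hrn] at this
          exact_mod_cast this
        have hm1 : (m : ℤ) + 1 = (n : ℤ) + 1 - 2 * r := by omega
        rw [hm1]
        linear_combination ((n : ℤ) + 1) * hW + hA' + hC' - hB'
    exact_mod_cast goalZ
  · rw [if_neg h, W_vanish n m h, Nat.mul_zero]
end

section
/- For nonnegative integers k, a, b, the sum over i from 0 to k of the multinomial coefficient (2k+a+b)! / (i! · (i+a)! · (k−i)! · (k−i+b)!) equals binomial(2k+a+b, k) · binomial(2k+a+b, k+a). -/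
open Nat

/-- Vandermonde-type identity: for nonnegative integers `k, a, b`,
`∑_{i=0}^{k} (2k+a+b)! / (i!·(i+a)!·(k−i)!·(k−i+b)!) = C(2k+a+b,k)·C(2k+a+b,k+a)`.
Each summand is the multinomial coefficient `(2k+a+b choose i, i+a, k−i, k−i+b)`,
so the natural-number divisions are exact. -/
theorem sum_multinomials_eq_prod_binomials (k a b : ℕ) :
    (∑ i ∈ Finset.range (k + 1),
        (2 * k + a + b)! / (i ! * (i + a)! * (k - i)! * (k - i + b)!)) =
      (2 * k + a + b).choose k * (2 * k + a + b).choose (k + a) := by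
  set n := 2 * k + a + b with hn
  have step1 : ∀ i ∈ Finset.range (k + 1),
      n ! / (i ! * (i + a)! * (k - i)! * (k - i + b)!) =
      n.choose (k + a) * ((k + a).choose (i + a) * (k + b).choose (k - i + b)) := by
    intro i hi
    have hik : i ≤ k := by simpa [Nat.lt_succ_iff] using hi
    have h1 : (k + a).choose (i + a) * (i + a)! * (k - i)! = (k + a)! := by
      have h := Nat.choose_mul_factorial_mul_factorial (show i + a ≤ k + a by omega)
      have hs : k + a - (i + a) = k - i := by omega
      rwa [hs] at h
    have h2 : (k + b).choose (k - i + b) * (k - i + b)! * i ! = (k + b)! := by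
      have h := Nat.choose_mul_factorial_mul_factorial (show k - i + b ≤ k + b by omega)
      have hs : k + b - (k - i + b) = i := by omega
      rwa [hs] at h
    have h3 : n.choose (k + a) * (k + a)! * (k + b)! = n ! := by
      have h := Nat.choose_mul_factorial_mul_factorial (show k + a ≤ n by omega)
      have hs : n - (k + a) = k + b := by omega
      rwa [hs] at h
    have key : n.choose (k + a) * ((k + a).choose (i + a) * (k + b).choose (k - i + b)) *
        (i ! * (i + a)! * (k - i)! * (k - i + b)!) = n ! := by
      calc n.choose (k + a) * ((k + a).choose (i + a) * (k + b).choose (k - i + b)) *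
            (i ! * (i + a)! * (k - i)! * (k - i + b)!)
          = n.choose (k + a) * ((k + a).choose (i + a) * (i + a)! * (k - i)!) *
            ((k + b).choose (k - i + b) * (k - i + b)! * i !) := by ring
        _ = n.choose (k + a) * (k + a)! * (k + b)! := by rw [h1, h2]
        _ = n ! := h3
    have hpos : 0 < i ! * (i + a)! * (k - i)! * (k - i + b)! := by positivity
    exact Nat.div_eq_of_eq_mul_left hpos key.symm
  rw [Finset.sum_congr rfl step1, ← Finset.mul_sum]
  have hvand : ∑ i ∈ Finset.range (k + 1),
      (k + a).choose (i + a) * (k + b).choose (k - i + b) = n.choose k := by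
    have h := Nat.add_choose_eq (k + a) (k + b) (k + a + b)
    rw [Finset.Nat.sum_antidiagonal_eq_sum_range_succ_mk] at h
    have hz : ∀ j ∈ Finset.range (k + a + b + 1), j ∉ Finset.Ico a (k + a + 1) →
        (k + a).choose j * (k + b).choose (k + a + b - j) = 0 := by
      intro j _ hj
      rcases (by simp [Finset.mem_Ico] at hj; omega :
          j < a ∨ k + a < j) with hlt | hgt
      · have : k + b < k + a + b - j := by omega
        simp [Nat.choose_eq_zero_of_lt this]
      · simp [Nat.choose_eq_zero_of_lt hgt]
    have hsub : Finset.Ico a (k + a + 1) ⊆ Finset.range (k + a + b + 1) := by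
      intro j hj; simp [Finset.mem_Ico] at hj ⊢; omega
    have h2 : ∑ j ∈ Finset.Ico a (k + a + 1),
        (k + a).choose j * (k + b).choose (k + a + b - j) =
        ((k + a) + (k + b)).choose (k + a + b) := by
      rw [h]; simpa using Finset.sum_subset hsub hz
    rw [Finset.sum_Ico_eq_sum_range] at h2
    have hrange : k + a + 1 - a = k + 1 := by omega
    rw [hrange] at h2
    have hterm : ∀ i ∈ Finset.range (k + 1),
        (k + a).choose (a + i) * (k + b).choose (k + a + b - (a + i)) =
        (k + a).choose (i + a) * (k + b).choose (k - i + b) := by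
      intro i hi
      have hik : i ≤ k := by simpa [Nat.lt_succ_iff] using hi
      rw [show a + i = i + a from by omega,
        show k + a + b - (i + a) = k - i + b from by omega]
    rw [Finset.sum_congr rfl hterm] at h2
    have hck : ((k + a) + (k + b)).choose (k + a + b) = n.choose k := by
      have : (k + a) + (k + b) = n := by omega
      rw [this]
      have hs : n - k = k + a + b := by omega
      rw [← hs]
      exact Nat.choose_symm (by omega)
    rw [h2, hck]
  rw [hvand, Nat.mul_comm]
end

section
/- For nonnegative integers n, i, j, binomial(n, i)·binomial(n, j) − binomial(n, i−1)·binomial(n, j−1) = ((n − i − j + 1)/(n + 1)) · binomial(n+1, i) · binomial(n+1, j); equivalently (n+1)·(binomial(n,i)·binomial(n,j) − binomial(n,i−1)·binomial(n,j−1)) = (n − i − j + 1)·binomial(n+1,i)·binomial(n+1,j), where the right side is interpreted in ℤ. -/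
lemma aux1 (n i : ℕ) :
    ((n : ℤ) + 1 - i) * ((n + 1).choose i : ℤ) = ((n : ℤ) + 1) * (n.choose i : ℤ) := by
  rcases le_or_gt i (n + 1) with h | h
  · have := Nat.choose_mul_succ_eq n i
    have h2 : ((n + 1 - i : ℕ) : ℤ) = (n : ℤ) + 1 - i := by omega
    have := congrArg (fun x : ℕ => (x : ℤ)) this
    push_cast at this
    rw [← h2]
    linarith
  · rw [Nat.choose_eq_zero_of_lt h, Nat.choose_eq_zero_of_lt (by omega)]
    ring

lemma aux2 (n i : ℕ) (hi : 1 ≤ i) :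
    ((n : ℤ) + 1) * (n.choose (i - 1) : ℤ) = (i : ℤ) * ((n + 1).choose i : ℤ) := by
  have := Nat.add_one_mul_choose_eq n (i - 1)
  have h1 : i - 1 + 1 = i := by omega
  simp only [Nat.succ_eq_add_one, h1] at this
  have := congrArg (fun x : ℕ => (x : ℤ)) this
  push_cast at this
  linarith

/-- For nonnegative integers `n, i, j`, over the integers:
`(n+1)·(C(n,i)·C(n,j) − C(n,i−1)·C(n,j−1)) = (n − i − j + 1)·C(n+1,i)·C(n+1,j)`,
where binomials with negative lower index are `0`. -/
theorem binomial_product_difference (n i j : ℕ) :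
    ((n : ℤ) + 1) * ((n.choose i : ℤ) * (n.choose j : ℤ) -
        (intChoose n ((i : ℤ) - 1) : ℤ) * (intChoose n ((j : ℤ) - 1) : ℤ)) =
      ((n : ℤ) - i - j + 1) * ((n + 1).choose i : ℤ) * ((n + 1).choose j : ℤ) := by
  have hn : ((n : ℤ) + 1) ≠ 0 := by positivity
  rcases Nat.eq_zero_or_pos i with hi | hi
  · subst hi
    simp only [intChoose, CharP.cast_eq_zero, zero_sub]
    norm_num
    have := aux1 n j
    linarith [aux1 n j]
  rcases Nat.eq_zero_or_pos j with hj | hj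
  · subst hj
    simp only [intChoose, CharP.cast_eq_zero, zero_sub]
    norm_num
    linarith [aux1 n i]
  have hci : (intChoose n ((i : ℤ) - 1) : ℤ) = (n.choose (i - 1) : ℤ) := by
    simp only [intChoose, if_pos (by omega : (0:ℤ) ≤ (i : ℤ) - 1)]
    congr 2
    omega
  have hcj : (intChoose n ((j : ℤ) - 1) : ℤ) = (n.choose (j - 1) : ℤ) := by
    simp only [intChoose, if_pos (by omega : (0:ℤ) ≤ (j : ℤ) - 1)]
    congr 2
    omega
  rw [hci, hcj]
  apply mul_left_cancel₀ hn
  have e1 := aux1 n i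
  have e2 := aux1 n j
  have e3 := aux2 n i hi
  have e4 := aux2 n j hj
  linear_combination (-((n:ℤ)+1)*(n.choose j : ℤ))*e1 + (-((n:ℤ)+1-i)*((n+1).choose i : ℤ))*e2 +
    (-((n:ℤ)+1)*(n.choose (j-1) : ℤ))*e3 + (-(i:ℤ)*((n+1).choose i : ℤ))*e4
end

section
/- For integers n ≥ 1, m ≥ 0 and 0 ≤ k ≤ l, the sum over i from k to l of (n − m − 2i)·binomial(n, i)·binomial(n, m+i) equals n·(binomial(n−1, l)·binomial(n−1, m+l) − binomial(n−1, k−1)·binomial(n−1, m+k−1)). -/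
lemma lemA (n j : ℕ) (hn : 1 ≤ n) :
    (j : ℤ) * n.choose j = n * intChoose (n - 1) ((j : ℤ) - 1) := by
  obtain ⟨p, rfl⟩ : ∃ p, n = p + 1 := ⟨n - 1, (Nat.succ_pred_eq_of_pos hn).symm⟩
  cases j with
  | zero => simp [intChoose]
  | succ j =>
      have h : ((j : ℤ) + 1) - 1 = (j : ℤ) := by ring
      simp only [intChoose, Nat.cast_succ, Nat.add_sub_cancel, h, Int.toNat_natCast,
        if_pos (Int.natCast_nonneg j)]
      have h2 := congrArg (Nat.cast (R := ℤ)) (Nat.add_one_mul_choose_eq p j)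
      push_cast at h2 ⊢
      linarith [h2]

lemma lemB (n j : ℕ) (hn : 1 ≤ n) :
    ((n : ℤ) - j) * n.choose j = n * (n - 1).choose j := by
  obtain ⟨p, rfl⟩ : ∃ p, n = p + 1 := ⟨n - 1, (Nat.succ_pred_eq_of_pos hn).symm⟩
  cases j with
  | zero => simp
  | succ j =>
      have hp : (p + 1).choose (j + 1) = p.choose j + p.choose (j + 1) :=
        Nat.choose_succ_succ p j
      have hA := lemA (p + 1) (j + 1) hn
      have h : ((j : ℤ) + 1) - 1 = (j : ℤ) := by ring
      simp only [intChoose, Nat.cast_succ, Nat.add_sub_cancel, h, Int.toNat_natCast,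
        if_pos (Int.natCast_nonneg j)] at hA
      push_cast [hp] at hA ⊢
      linarith [hA]

lemma key (n m i : ℕ) (hn : 1 ≤ n) :
    ((n : ℤ) - m - 2 * i) * n.choose i * n.choose (m + i) =
      n * (((n - 1).choose i : ℤ) * ((n - 1).choose (m + i) : ℤ) -
        (intChoose (n - 1) ((i : ℤ) - 1) : ℤ) *
          (intChoose (n - 1) ((m : ℤ) + i - 1) : ℤ)) := by
  have hn0 : (n : ℤ) ≠ 0 := Int.natCast_ne_zero.mpr (by omega)
  have hAi := lemA n i hn
  have hAmi := lemA n (m + i) hn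
  have hBi := lemB n i hn
  have hBmi := lemB n (m + i) hn
  have hc : ((m + i : ℕ) : ℤ) - 1 = (m : ℤ) + i - 1 := by push_cast; ring
  rw [hc] at hAmi
  apply mul_left_cancel₀ hn0
  apply mul_left_cancel₀ hn0
  push_cast at hAmi hBmi ⊢
  linear_combination ((n : ℤ) * ((n : ℤ) - m - i) * (n.choose (m + i) : ℤ)) * hBi +
    ((n : ℤ) * (n : ℤ) * ((n - 1).choose i : ℤ)) * hBmi -
    ((n : ℤ) * ((m : ℤ) + i) * (n.choose (m + i) : ℤ)) * hAi -
    ((n : ℤ) * (n : ℤ) * (intChoose (n - 1) ((i : ℤ) - 1) : ℤ)) * hAmi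

/-- For integers `n ≥ 1`, `m ≥ 0`, `0 ≤ k ≤ l`:
`∑_{i=k}^{l} (n − m − 2i)·C(n,i)·C(n,m+i)
  = n·(C(n−1,l)·C(n−1,m+l) − C(n−1,k−1)·C(n−1,m+k−1))`,
where binomials with negative lower index are `0`. -/
theorem sum_weighted_binomial_products (n m k l : ℕ) (hn : 1 ≤ n) (hkl : k ≤ l) :
    (∑ i ∈ Finset.Icc k l, ((n : ℤ) - m - 2 * i) * (n.choose i : ℤ) *
        (n.choose (m + i) : ℤ)) =
      (n : ℤ) * (((n - 1).choose l : ℤ) * ((n - 1).choose (m + l) : ℤ) -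
        (intChoose (n - 1) ((k : ℤ) - 1) : ℤ) *
          (intChoose (n - 1) ((m : ℤ) + k - 1) : ℤ)) := by
  induction l, hkl using Nat.le_induction with
  | base =>
      rw [Finset.Icc_self, Finset.sum_singleton]
      exact key n m k hn
  | succ l hkl ih =>
      rw [Finset.sum_Icc_succ_top (Nat.le_succ_of_le hkl), ih, key n m (l + 1) hn]
      have h1 : intChoose (n - 1) (((l + 1 : ℕ) : ℤ) - 1) = (n - 1).choose l := by
        rw [show ((l + 1 : ℕ) : ℤ) - 1 = ((l : ℕ) : ℤ) by push_cast; ring]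
        simp [intChoose]
      have h2 : intChoose (n - 1) ((m : ℤ) + ((l + 1 : ℕ) : ℤ) - 1) =
          (n - 1).choose (m + l) := by
        rw [show (m : ℤ) + ((l + 1 : ℕ) : ℤ) - 1 = ((m + l : ℕ) : ℤ) by push_cast; ring]
        simp only [intChoose, if_pos (Int.natCast_nonneg _), Int.toNat_natCast]
      rw [h1, h2]
      ring
end

section
/- The number of walks of length n on the two-dimensional square lattice graph ℤ² (Cartesian product of two integer line graphs, steps ±e₁ or ±e₂) from the origin to the point (m₁, m₂) equals binomial(n, (n−m₁−m₂)/2) · binomial(n, (n+m₁−m₂)/2) if n − m₁ − m₂ is even, and 0 otherwise. -/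
/-- A single step on the square lattice `ℤ²`: the first component selects the
coordinate direction (`0` = `e₁`, `1` = `e₂`), the second the sign. -/
def latticeStep (c : Fin 2) (d : Bool) : ℤ × ℤ :=
  if c = 0 then ((if d then 1 else -1), 0) else (0, (if d then 1 else -1))

lemma card_bool_filter (n k : ℕ) :
    Fintype.card {f : Fin n → Bool // (Finset.univ.filter (fun i => f i)).card = k} =
      n.choose k := by
  have e : {f : Fin n → Bool // (Finset.univ.filter (fun i => f i)).card = k} ≃
      {s : Finset (Fin n) // s.card = k} :=
    { toFun := fun f => ⟨Finset.univ.filter (fun i => f.1 i), f.2⟩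
      invFun := fun s => ⟨fun i => decide (i ∈ s.1), by
        have : (Finset.univ.filter (fun i => decide (i ∈ s.1) = true)) = s.1 := by
          ext i; simp
        rw [this, s.2]⟩
      left_inv := fun f => by
        ext i
        simp
      right_inv := fun s => by
        ext i
        simp }
  rw [Fintype.card_congr e, Fintype.card_finset_len, Fintype.card_fin]

lemma count_bool (n : ℕ) (d : ℤ) :
    Fintype.card {f : Fin n → Bool // (∑ i : Fin n, if f i then (1:ℤ) else -1) = d} =
      if Even ((n : ℤ) + d) then intChoose n (((n : ℤ) + d) / 2) else 0 := by
  have key : ∀ f : Fin n → Bool,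
      (∑ i : Fin n, if f i then (1:ℤ) else -1) =
        2 * ((Finset.univ.filter (fun i => f i)).card : ℤ) - n := by
    intro f
    have : ∀ i, (if f i then (1:ℤ) else -1) = 2 * (if f i then (1:ℤ) else 0) - 1 := by
      intro i; split <;> ring
    rw [Finset.sum_congr rfl (fun i _ => this i), Finset.sum_sub_distrib,
      ← Finset.mul_sum, Finset.sum_boole, Finset.sum_const, Finset.card_univ,
      Fintype.card_fin]
    simp
  by_cases hpar : Even ((n : ℤ) + d)
  · rw [if_pos hpar]
    set j : ℤ := ((n : ℤ) + d) / 2 with hj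
    have h2j : 2 * j = (n : ℤ) + d := by
      obtain ⟨r, hr⟩ := hpar; omega
    by_cases hjn : 0 ≤ j
    · rw [intChoose, if_pos hjn]
      have e : {f : Fin n → Bool // (∑ i : Fin n, if f i then (1:ℤ) else -1) = d} ≃
          {f : Fin n → Bool // (Finset.univ.filter (fun i => f i)).card = j.toNat} := by
        apply Equiv.subtypeEquivRight
        intro f
        rw [key f]
        constructor
        · intro h
          omega
        · intro h
          omega
      rw [Fintype.card_congr e, card_bool_filter]
    · rw [intChoose, if_neg hjn]
      rw [Fintype.card_eq_zero_iff]
      constructor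
      rintro ⟨f, hf⟩
      rw [key f] at hf
      have : (0 : ℤ) ≤ (Finset.univ.filter (fun i => f i)).card := Int.natCast_nonneg _
      omega
  · rw [if_neg hpar]
    rw [Fintype.card_eq_zero_iff]
    constructor
    rintro ⟨f, hf⟩
    rw [key f] at hf
    exact hpar ⟨((Finset.univ.filter (fun i => f i)).card : ℤ), by omega⟩

/-- The rotation `Fin 2 × Bool ≃ Bool × Bool`. -/
def stepEquiv : Fin 2 × Bool ≃ Bool × Bool where
  toFun p := (p.2, (decide (p.1 = 0)) == p.2)
  invFun q := (if q.1 == q.2 then 0 else 1, q.1)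
  left_inv p := by
    obtain ⟨c, d⟩ := p
    fin_cases c <;> cases d <;> simp
  right_inv q := by
    obtain ⟨a, b⟩ := q
    cases a <;> cases b <;> simp

lemma step_fst_add_snd (c : Fin 2) (d : Bool) :
    (if (stepEquiv (c, d)).1 then (1:ℤ) else -1) =
      (latticeStep c d).1 + (latticeStep c d).2 := by
  fin_cases c <;> cases d <;> simp [latticeStep, stepEquiv]

lemma step_fst_sub_snd (c : Fin 2) (d : Bool) :
    (if (stepEquiv (c, d)).2 then (1:ℤ) else -1) =
      (latticeStep c d).1 - (latticeStep c d).2 := by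
  fin_cases c <;> cases d <;> simp [latticeStep, stepEquiv]

lemma intChoose_symm {n : ℕ} {j j' : ℤ} (h : j + j' = n) :
    intChoose n j = intChoose n j' := by
  unfold intChoose
  by_cases hj : 0 ≤ j
  · by_cases hj' : 0 ≤ j'
    · rw [if_pos hj, if_pos hj']
      by_cases hle : j.toNat ≤ n
      · have : j'.toNat = n - j.toNat := by omega
        rw [this, Nat.choose_symm hle]
      · rw [Nat.choose_eq_zero_of_lt (by omega), Nat.choose_eq_zero_of_lt (by omega)]
    · rw [if_pos hj, if_neg hj', Nat.choose_eq_zero_of_lt (by omega)]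
  · by_cases hj' : 0 ≤ j'
    · rw [if_neg hj, if_pos hj', Nat.choose_eq_zero_of_lt (by omega)]
    · rw [if_neg hj, if_neg hj']

/-- The number of walks of length `n` on the square lattice `ℤ²` (each step
`±e₁` or `±e₂`) from the origin to `(m₁, m₂)` equals
`C(n,(n−m₁−m₂)/2) · C(n,(n+m₁−m₂)/2)` if `n − m₁ − m₂` is even (binomials with
out-of-range arguments being `0`), and `0` otherwise. -/
theorem walks_on_Z2 (n : ℕ) (m₁ m₂ : ℤ) :
    Fintype.card {s : Fin n → Fin 2 × Bool //
        (∑ i : Fin n, latticeStep (s i).1 (s i).2) = (m₁, m₂)} =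
      if Even ((n : ℤ) - m₁ - m₂) then
        intChoose n (((n : ℤ) - m₁ - m₂) / 2) * intChoose n (((n : ℤ) + m₁ - m₂) / 2)
      else 0 := by
  classical
  -- Split the walk into two independent ±1 walks.
  have e : {s : Fin n → Fin 2 × Bool //
        (∑ i : Fin n, latticeStep (s i).1 (s i).2) = (m₁, m₂)} ≃
      {f : Fin n → Bool // (∑ i : Fin n, if f i then (1:ℤ) else -1) = m₁ + m₂} ×
      {g : Fin n → Bool // (∑ i : Fin n, if g i then (1:ℤ) else -1) = m₁ - m₂} :=
    { toFun := fun s =>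
        (⟨fun i => (stepEquiv (s.1 i)).1, by
          have := s.2
          have hfst : (∑ i : Fin n, latticeStep (s.1 i).1 (s.1 i).2).1 = m₁ := by
            rw [this]
          have hsnd : (∑ i : Fin n, latticeStep (s.1 i).1 (s.1 i).2).2 = m₂ := by
            rw [this]
          rw [Prod.fst_sum] at hfst
          rw [Prod.snd_sum] at hsnd
          calc (∑ i : Fin n, if (stepEquiv (s.1 i)).1 then (1:ℤ) else -1)
              = ∑ i : Fin n, ((latticeStep (s.1 i).1 (s.1 i).2).1 +
                  (latticeStep (s.1 i).1 (s.1 i).2).2) := by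
                refine Finset.sum_congr rfl fun i _ => ?_
                exact step_fst_add_snd (s.1 i).1 (s.1 i).2
            _ = m₁ + m₂ := by rw [Finset.sum_add_distrib, hfst, hsnd]⟩,
         ⟨fun i => (stepEquiv (s.1 i)).2, by
          have := s.2
          have hfst : (∑ i : Fin n, latticeStep (s.1 i).1 (s.1 i).2).1 = m₁ := by
            rw [this]
          have hsnd : (∑ i : Fin n, latticeStep (s.1 i).1 (s.1 i).2).2 = m₂ := by
            rw [this]
          rw [Prod.fst_sum] at hfst
          rw [Prod.snd_sum] at hsnd
          calc (∑ i : Fin n, if (stepEquiv (s.1 i)).2 then (1:ℤ) else -1)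
              = ∑ i : Fin n, ((latticeStep (s.1 i).1 (s.1 i).2).1 -
                  (latticeStep (s.1 i).1 (s.1 i).2).2) := by
                refine Finset.sum_congr rfl fun i _ => ?_
                exact step_fst_sub_snd (s.1 i).1 (s.1 i).2
            _ = m₁ - m₂ := by rw [Finset.sum_sub_distrib, hfst, hsnd]⟩)
      invFun := fun fg =>
        ⟨fun i => stepEquiv.symm (fg.1.1 i, fg.2.1 i), by
          set s : Fin n → Fin 2 × Bool := fun i => stepEquiv.symm (fg.1.1 i, fg.2.1 i)
            with hs
          have hA : ∀ i, (stepEquiv (s i)).1 = fg.1.1 i := by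
            intro i; rw [hs]; simp
          have hB : ∀ i, (stepEquiv (s i)).2 = fg.2.1 i := by
            intro i; rw [hs]; simp
          have h1 : (∑ i : Fin n, if (stepEquiv (s i)).1 then (1:ℤ) else -1) =
              m₁ + m₂ := by
            rw [Finset.sum_congr rfl fun i _ => by rw [hA i]]
            exact fg.1.2
          have h2 : (∑ i : Fin n, if (stepEquiv (s i)).2 then (1:ℤ) else -1) =
              m₁ - m₂ := by
            rw [Finset.sum_congr rfl fun i _ => by rw [hB i]]
            exact fg.2.2
          have e1 : (∑ i : Fin n, if (stepEquiv (s i)).1 then (1:ℤ) else -1) =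
              (∑ i : Fin n, latticeStep (s i).1 (s i).2).1 +
              (∑ i : Fin n, latticeStep (s i).1 (s i).2).2 := by
            rw [Prod.fst_sum, Prod.snd_sum, ← Finset.sum_add_distrib]
            exact Finset.sum_congr rfl fun i _ => step_fst_add_snd (s i).1 (s i).2
          have e2 : (∑ i : Fin n, if (stepEquiv (s i)).2 then (1:ℤ) else -1) =
              (∑ i : Fin n, latticeStep (s i).1 (s i).2).1 -
              (∑ i : Fin n, latticeStep (s i).1 (s i).2).2 := by
            rw [Prod.fst_sum, Prod.snd_sum, ← Finset.sum_sub_distrib]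
            exact Finset.sum_congr rfl fun i _ => step_fst_sub_snd (s i).1 (s i).2
          rw [e1] at h1
          rw [e2] at h2
          have : (∑ i : Fin n, latticeStep (s i).1 (s i).2).1 = m₁ ∧
              (∑ i : Fin n, latticeStep (s i).1 (s i).2).2 = m₂ := by
            constructor <;> linarith
          exact Prod.ext this.1 this.2⟩
      left_inv := fun s => by
        apply Subtype.ext
        funext i
        simp
      right_inv := fun fg => by
        refine Prod.ext (Subtype.ext ?_) (Subtype.ext ?_) <;> funext i <;> simp }
  rw [Fintype.card_congr e, Fintype.card_prod, count_bool, count_bool]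
  have hpar1 : Even ((n : ℤ) + (m₁ + m₂)) ↔ Even ((n : ℤ) - m₁ - m₂) := by
    rw [Int.even_iff, Int.even_iff]; omega
  have hpar2 : Even ((n : ℤ) + (m₁ - m₂)) ↔ Even ((n : ℤ) - m₁ - m₂) := by
    rw [Int.even_iff, Int.even_iff]; omega
  by_cases h : Even ((n : ℤ) - m₁ - m₂)
  · rw [if_pos (hpar1.mpr h), if_pos (hpar2.mpr h), if_pos h]
    congr 1
    · apply intChoose_symm
      obtain ⟨r, hr⟩ := h
      omega
    · congr 1
      ring
  · rw [if_neg (fun hc => h (hpar1.mp hc)), if_neg h, zero_mul]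
end

section
/- For the Cartesian product G₁ × G₂ of two locally finite graphs, the number of walks of length n from (u₁,u₂) to (v₁,v₂) equals the sum over j from 0 to n of binomial(n, j) · c_j(G₁, u₁ → v₁) · c_{n−j}(G₂, u₂ → v₂), where c_k denotes the number of walks of length k in the respective factor. -/
open SimpleGraph

section Aux

variable {V : Type*} [DecidableEq V] (G : SimpleGraph V) [G.LocallyFinite]

lemma cardWL_zero (u v : V) :
    (G.finsetWalkLength 0 u v).card = if u = v then 1 else 0 := by
  split_ifs with h
  · subst h
    have : G.finsetWalkLength 0 u u = {SimpleGraph.Walk.nil} := by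
      ext p
      simp [SimpleGraph.mem_finsetWalkLength_iff, SimpleGraph.Walk.length_eq_zero_iff]
    rw [this]; simp
  · rw [Finset.card_eq_zero, Finset.eq_empty_iff_forall_notMem]
    intro p hp
    exact h (SimpleGraph.Walk.eq_of_length_eq_zero
      (SimpleGraph.mem_finsetWalkLength_iff.mp hp))

lemma cardWL_succ (n : ℕ) (u v : V) :
    (G.finsetWalkLength (n + 1) u v).card =
      ∑ w ∈ G.neighborFinset u, (G.finsetWalkLength n w v).card := by
  have hdef : G.finsetWalkLength (n + 1) u v =
      Finset.univ.biUnion fun (w : G.neighborSet u) => (G.finsetWalkLength n w v).map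
        ⟨fun p => SimpleGraph.Walk.cons w.property p, fun _ _ => by intro h; cases h; rfl⟩ := rfl
  have : (G.finsetWalkLength (n + 1) u v).card =
      ∑ w : G.neighborSet u, ((G.finsetWalkLength n w v).map
        ⟨fun p => SimpleGraph.Walk.cons w.property p, fun _ _ => by intro h; cases h; rfl⟩).card := by
    rw [hdef]
    apply Finset.card_biUnion
    intro a _ b _ hab
    simp only [Finset.disjoint_left]
    rintro p hp hq
    simp only [Finset.mem_map, Function.Embedding.coeFn_mk] at hp hq
    obtain ⟨p₁, _, rfl⟩ := hp
    obtain ⟨p₂, _, h⟩ := hq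
    apply hab
    have h1 := congrArg SimpleGraph.Walk.support h
    change (SimpleGraph.Walk.cons ((G.mem_neighborSet u b).mp b.property) p₂).support =
      (SimpleGraph.Walk.cons ((G.mem_neighborSet u a).mp a.property) p₁).support at h1
    rw [SimpleGraph.Walk.support_cons, SimpleGraph.Walk.support_cons,
      p₂.support_eq_cons, p₁.support_eq_cons] at h1
    exact Subtype.ext (by injection (List.cons.inj h1).2 with h2 _; exact h2.symm)
  rw [this]
  simp only [Finset.card_map]
  rw [← Finset.sum_coe_sort (G.neighborFinset u) (fun w => (G.finsetWalkLength n w v).card)]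
  exact Fintype.sum_equiv ((Equiv.refl V).subtypeEquiv (by simp)) _ _ (fun _ => rfl)

lemma key_binom (a b : ℕ → ℕ) (n : ℕ) :
    (∑ j ∈ Finset.range (n + 1), n.choose j * a (j + 1) * b (n - j)) +
      ∑ j ∈ Finset.range (n + 1), n.choose j * a j * b (n + 1 - j) =
    ∑ j ∈ Finset.range (n + 2), (n + 1).choose j * a j * b (n + 1 - j) := by
  rw [Finset.sum_range_succ' (fun j => (n + 1).choose j * a j * b (n + 1 - j)) (n + 1)]
  have h1 : ∀ j, (n + 1).choose (j + 1) * a (j + 1) * b (n + 1 - (j + 1)) =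
      n.choose j * a (j + 1) * b (n - j) + n.choose (j + 1) * a (j + 1) * b (n - j) := by
    intro j
    rw [Nat.choose_succ_succ, Nat.add_mul, Nat.add_mul]
    simp [Nat.succ_sub_succ]
  simp only [h1]
  rw [Finset.sum_add_distrib, Nat.add_assoc]
  congr 1
  rw [Finset.sum_range_succ' (fun j => n.choose j * a j * b (n + 1 - j)) n]
  rw [Finset.sum_range_succ (fun j => n.choose (j + 1) * a (j + 1) * b (n - j)) n]
  simp [Nat.choose_succ_self, Nat.succ_sub_succ]

end Aux

/-- For the Cartesian (box) product `G₁ □ G₂` of two locally finite graphs, the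
number of walks of length `n` from `(u₁,u₂)` to `(v₁,v₂)` equals
`∑_{j=0}^{n} C(n,j) · c_j(G₁,u₁→v₁) · c_{n−j}(G₂,u₂→v₂)`. -/
theorem boxProd_walk_count {V₁ V₂ : Type*} [DecidableEq V₁] [DecidableEq V₂]
    (G₁ : SimpleGraph V₁) (G₂ : SimpleGraph V₂)
    [G₁.LocallyFinite] [G₂.LocallyFinite]
    (n : ℕ) (u₁ v₁ : V₁) (u₂ v₂ : V₂) :
    ((G₁ □ G₂).finsetWalkLength n (u₁, u₂) (v₁, v₂)).card =
      ∑ j ∈ Finset.range (n + 1), n.choose j *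
        (G₁.finsetWalkLength j u₁ v₁).card * (G₂.finsetWalkLength (n - j) u₂ v₂).card := by
  induction n generalizing u₁ u₂ with
  | zero =>
    rw [show (0 : ℕ) + 1 = 1 from rfl, Finset.range_one, Finset.sum_singleton]
    rw [cardWL_zero, cardWL_zero, cardWL_zero]
    by_cases h1 : u₁ = v₁ <;> by_cases h2 : u₂ = v₂ <;>
      simp [h1, h2, Prod.ext_iff]
  | succ n ih =>
    rw [cardWL_succ, neighborFinset_boxProd, Finset.sum_disjUnion]
    simp only [Finset.sum_product, Finset.sum_singleton, Finset.sum_product',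
      Finset.sum_singleton]
    have hA : ∑ w₁ ∈ G₁.neighborFinset u₁,
        ((G₁ □ G₂).finsetWalkLength n (w₁, u₂) (v₁, v₂)).card =
        ∑ j ∈ Finset.range (n + 1), n.choose j *
          (G₁.finsetWalkLength (j + 1) u₁ v₁).card *
          (G₂.finsetWalkLength (n - j) u₂ v₂).card := by
      simp only [ih]
      rw [Finset.sum_comm]
      refine Finset.sum_congr rfl fun j _ => ?_
      rw [← Finset.sum_mul, ← Finset.mul_sum, ← cardWL_succ]
    have hB : ∑ w₂ ∈ G₂.neighborFinset u₂,
        ((G₁ □ G₂).finsetWalkLength n (u₁, w₂) (v₁, v₂)).card =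
        ∑ j ∈ Finset.range (n + 1), n.choose j *
          (G₁.finsetWalkLength j u₁ v₁).card *
          (G₂.finsetWalkLength (n + 1 - j) u₂ v₂).card := by
      simp only [ih]
      rw [Finset.sum_comm]
      refine Finset.sum_congr rfl fun j hj => ?_
      rw [← Finset.mul_sum, ← cardWL_succ,
        Nat.succ_sub (Nat.lt_succ_iff.mp (Finset.mem_range.mp hj))]
    rw [hA, hB]
    exact key_binom (fun j => (G₁.finsetWalkLength j u₁ v₁).card)
      (fun j => (G₂.finsetWalkLength j u₂ v₂).card) n
end
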